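/- There is a constant e such that for every binary string x with |x| ≥ 2, every finite set S of binary strings with x ∈ S, and every integer c ≥ 0: if C(S) + ⌊log₂|S|⌋ ≤ C(x) + c (S is c-sufficient for x), then ⌊log₂|S|⌋ − C(x | S) ≤ c + e·⌊log₂|x|⌋ (x is (c + O(log|x|))-typical in S). -/

import Mathlib

/-- Bijective binary encoding of binary strings as natural numbers. -/
def strToNat : List Bool → ℕ
  | [] => 0
  | b :: t => (if b then 2 else 1) + 2 * strToNat t

/-- The partial result of running machine `M` on program `p` and auxiliary input `d`. -/
def evalS (M : Nat.Partrec.Code) (p d : List Bool) : Part ℕ :=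
  M.eval (Nat.pair (strToNat p) (strToNat d))

/-- `M(p, d) = x`. -/
def outputs (M : Nat.Partrec.Code) (p d x : List Bool) : Prop :=
  strToNat x ∈ evalS M p d

/-- `M` halts on program `p` (with empty auxiliary input). -/
def haltsOn (M : Nat.Partrec.Code) (p : List Bool) : Prop :=
  (evalS M p []).Dom

/-- The number of computation steps taken by `M` on program `p` (with empty auxiliary
input); meaningful only when `M` halts on `p`. -/
noncomputable def halttime (M : Nat.Partrec.Code) (p : List Bool) : ℕ :=
  sInf {t | (Nat.Partrec.Code.evaln t M (Nat.pair (strToNat p) 0)).isSome}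

/-- `M` is a universal machine: it simulates every machine `V` via a prefix `w_V`. -/
def Universal (M : Nat.Partrec.Code) : Prop :=
  ∀ V : Nat.Partrec.Code, ∃ w : List Bool, ∀ p y : List Bool,
    (evalS V p y).Dom → evalS M (w ++ p) y = evalS V p y

/-- Plain Kolmogorov complexity `C(x)` on machine `M`. -/
noncomputable def Cpx (M : Nat.Partrec.Code) (x : List Bool) : ℕ :=
  sInf {n | ∃ p : List Bool, p.length = n ∧ outputs M p [] x}

/-- Sophistication of `x` at (integer) significance level `c`. -/
noncomputable def soph (M : Nat.Partrec.Code) (c : ℤ) (x : List Bool) : ℕ :=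
  sInf {n | ∃ p : List Bool, p.length = n ∧ (∀ d : List Bool, (evalS M p d).Dom) ∧
    ∃ d : List Bool, outputs M p d x ∧ (p.length + d.length : ℤ) ≤ (Cpx M x : ℤ) + c}

/-- Logical depth of `x` at significance level `c`. -/
noncomputable def ld (M : Nat.Partrec.Code) (c : ℕ) (x : List Bool) : ℕ :=
  sInf {t | ∃ p : List Bool, p.length ≤ Cpx M x + c ∧ outputs M p [] x ∧ halttime M p = t}

/-- The inverse Busy Beaver function `bb(n)`. -/
noncomputable def bbInv (M : Nat.Partrec.Code) (n : ℕ) : ℕ :=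
  sInf {k | ∃ p : List Bool, p.length = k ∧ haltsOn M p ∧ n ≤ halttime M p}

/-- Busy Beaver logical depth of `x` at significance `c`. -/
noncomputable def ldbb (M : Nat.Partrec.Code) (c : ℕ) (x : List Bool) : ℕ :=
  bbInv M (ld M c x)

/-- The Busy Beaver function `BB(l)`. -/
noncomputable def BB (M : Nat.Partrec.Code) (l : ℕ) : ℕ :=
  sSup {t | ∃ p : List Bool, p.length ≤ l ∧ haltsOn M p ∧ halttime M p = t}

/-- Canonical encoding of a finite set of binary strings: the code of the sorted list
of the codes of its elements. -/
def setCode (S : Finset (List Bool)) : ℕ :=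
  Encodable.encode ((S.image strToNat).sort (· ≤ ·))

/-- Kolmogorov complexity `C(S)` of a finite set of binary strings on machine `M`. -/
noncomputable def CSet (M : Nat.Partrec.Code) (S : Finset (List Bool)) : ℕ :=
  sInf {n | ∃ p : List Bool, p.length = n ∧ setCode S ∈ evalS M p []}

/-- Conditional Kolmogorov complexity `C(x | m)` where the condition is a natural number. -/
noncomputable def CpxCondN (M : Nat.Partrec.Code) (x : List Bool) (m : ℕ) : ℕ :=
  sInf {n | ∃ p : List Bool, p.length = n ∧ strToNat x ∈ M.eval (Nat.pair (strToNat p) m)}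

/-!
Given a shortest program `s` for `S` and a shortest program `q` for `x` given `S`, the program
"run `s`, then run `q` on its output", with `q` made self-delimiting at a cost of
`O(log |q|)` bits, gives `C(x) ≤ C(S) + C(x | S) + O(log C(x | S))`. As `C(x | S) ≤ |x| + O(1)`,
sufficiency `C(S) + log |S| ≤ C(x) + c` yields `log |S| - C(x | S) ≤ c + O(log |x|)`; the
additive constants are absorbed since `log |x| ≥ 1`.
-/

open Nat.Partrec (Code)

theorem strToNat_surjective : Function.Surjective strToNat := by
  intro n
  induction n using Nat.strong_induction_on with
  | _ n ih =>
    rcases n with _ | n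
    · exact ⟨[], rfl⟩
    obtain ⟨t, ht⟩ := ih (n / 2) (by omega)
    refine ⟨(n % 2 == 1) :: t, ?_⟩
    rcases Nat.mod_two_eq_zero_or_one n with h | h <;> simp [strToNat, ht, h] <;> omega

theorem strToNat_append (u v : List Bool) :
    strToNat (u ++ v) = strToNat u + 2 ^ u.length * strToNat v := by
  induction u with
  | nil => simp [strToNat]
  | cons b t ih =>
    simp only [List.cons_append, strToNat, ih, List.length_cons, pow_succ]
    ring

theorem two_pow_length_le_strToNat_add_one (u : List Bool) : 2 ^ u.length ≤ strToNat u + 1 := by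
  induction u with
  | nil => simp [strToNat]
  | cons b t ih => cases b <;> simp [strToNat, pow_succ] <;> omega

theorem strToNat_add_one_lt_two_pow (u : List Bool) : strToNat u + 1 < 2 ^ (u.length + 1) := by
  induction u with
  | nil => simp [strToNat]
  | cons b t ih => cases b <;> simp [strToNat, pow_succ] <;> omega

theorem length_le_log_strToNat (u : List Bool) : u.length ≤ Nat.log 2 (strToNat u + 1) :=
  Nat.le_log_of_pow_le one_lt_two (two_pow_length_le_strToNat_add_one u)

/-- The binary digits of `strToNat u + 1` are those of `u`, least significant first, below a
leading `1`; so for `N = strToNat (u ++ v)`, `splitCode u.length N` recovers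
`(strToNat u, strToNat v)` from the low `u.length` bits of `N + 1` and the bits above them. -/
def splitCode (k N : ℕ) : ℕ × ℕ :=
  ((N + 1) % 2 ^ k + 2 ^ k - 1, (N + 1) / 2 ^ k - 1)

theorem strToNat_append_add_one (u v : List Bool) :
    strToNat (u ++ v) + 1 =
      (strToNat u + 1 - 2 ^ u.length) + 2 ^ u.length * (strToNat v + 1) := by
  have := two_pow_length_le_strToNat_add_one u
  rw [strToNat_append]
  zify [this]
  ring

theorem strToNat_append_add_one_div (u v : List Bool) :
    (strToNat (u ++ v) + 1) / 2 ^ u.length = strToNat v + 1 := by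
  have := strToNat_add_one_lt_two_pow u
  rw [strToNat_append_add_one, Nat.add_mul_div_left _ _ (by positivity),
    Nat.div_eq_of_lt (by rw [pow_succ] at this; omega), zero_add]

theorem strToNat_append_add_one_mod (u v : List Bool) :
    (strToNat (u ++ v) + 1) % 2 ^ u.length = strToNat u + 1 - 2 ^ u.length := by
  have := strToNat_add_one_lt_two_pow u
  rw [strToNat_append_add_one, Nat.add_mul_mod_self_left,
    Nat.mod_eq_of_lt (by rw [pow_succ] at this; omega)]

theorem splitCode_strToNat_append (u v : List Bool) :
    splitCode u.length (strToNat (u ++ v)) = (strToNat u, strToNat v) := by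
  have := two_pow_length_le_strToNat_add_one u
  simp only [splitCode, strToNat_append_add_one_div, strToNat_append_add_one_mod]
  congr 1
  omega

theorem strToNat_append_cons_bit (u v : List Bool) (b : Bool) :
    (strToNat (u ++ b :: v) + 1) / 2 ^ u.length % 2 = 0 ↔ b = false := by
  rw [strToNat_append_add_one_div]
  cases b <;> simp [strToNat] <;> omega

theorem rfind_unary_prefix (ℓ : ℕ) (R : List Bool) :
    Nat.rfind (fun m => Part.some (decide
      ((strToNat (List.replicate ℓ true ++ false :: R) + 1) / 2 ^ m % 2 = 0))) = Part.some ℓ := by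
  refine Part.eq_some_iff.2 (Nat.mem_rfind.2 ⟨?_, fun {m} hm => ?_⟩)
  · simpa using (strToNat_append_cons_bit (List.replicate ℓ true) R false).2 rfl
  · obtain ⟨j, rfl⟩ := Nat.exists_eq_add_of_lt hm
    have hrep : List.replicate (m + j + 1) true =
        List.replicate m true ++ true :: List.replicate j true := by
      rw [add_assoc, List.replicate_add, List.replicate_succ]
    have := strToNat_append_cons_bit (List.replicate m true)
      (List.replicate j true ++ false :: R) true
    simp only [hrep, List.append_assoc, List.cons_append, Part.mem_some_iff]
    simpa using this

def pairProgram (L q s : List Bool) : List Bool :=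
  List.replicate L.length true ++ false :: (L ++ q ++ s)

theorem length_pairProgram (L q s : List Bool) :
    (pairProgram L q s).length = 2 * L.length + 1 + q.length + s.length := by
  simp [pairProgram]; ring

/-- `ℓ` is the position of the first `0` bit of `N + 1`, i.e. the length of the unary prefix of
`pairProgram`. -/
def decodePair (N : ℕ) : Part (ℕ × ℕ) :=
  (Nat.rfind fun m => Part.some (decide ((N + 1) / 2 ^ m % 2 = 0))).map fun ℓ =>
    let r := splitCode ℓ (splitCode (ℓ + 1) N).2
    splitCode r.1 r.2

theorem decodePair_pairProgram (L q s : List Bool) (hL : strToNat L = q.length) :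
    decodePair (strToNat (pairProgram L q s)) = Part.some (strToNat q, strToNat s) := by
  have hsplit : (List.replicate L.length true ++ [false]).length = L.length + 1 := by simp
  rw [decodePair, pairProgram, rfind_unary_prefix, Part.map_some]
  simp only
  rw [show List.replicate L.length true ++ false :: (L ++ q ++ s) =
    (List.replicate L.length true ++ [false]) ++ (L ++ (q ++ s)) by simp, ← hsplit,
    splitCode_strToNat_append, splitCode_strToNat_append, hL, splitCode_strToNat_append]

theorem Primrec.nat_pow : Primrec₂ ((· ^ ·) : ℕ → ℕ → ℕ) :=
  Primrec₂.unpaired'.1 Nat.Primrec.pow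

theorem primrec₂_splitCode : Primrec₂ splitCode := by
  have hN : Primrec fun p : ℕ × ℕ => p.2 + 1 := Primrec.succ.comp Primrec.snd
  have hpow : Primrec fun p : ℕ × ℕ => 2 ^ p.1 :=
    Primrec.nat_pow.comp (Primrec.const 2) Primrec.fst
  exact (Primrec.nat_sub.comp (Primrec.nat_add.comp (Primrec.nat_mod.comp hN hpow) hpow)
    (Primrec.const 1)).pair (Primrec.nat_sub.comp (Primrec.nat_div.comp hN hpow) (Primrec.const 1))

theorem partrec_decodePair : Partrec decodePair := by
  have hbit : Primrec₂ fun N m : ℕ => decide ((N + 1) / 2 ^ m % 2 = 0) :=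
    PrimrecPred.decide <| Primrec.eq.comp (Primrec.nat_mod.comp (Primrec.nat_div.comp
      (Primrec.succ.comp Primrec.fst) (Primrec.nat_pow.comp (Primrec.const 2) Primrec.snd))
      (Primrec.const 2)) (Primrec.const 0)
  have hr : Primrec₂ fun N ℓ : ℕ => splitCode ℓ (splitCode (ℓ + 1) N).2 :=
    primrec₂_splitCode.comp Primrec.snd (Primrec.snd.comp
      (primrec₂_splitCode.comp (Primrec.succ.comp Primrec.snd) Primrec.fst))
  exact (Partrec.rfind hbit.to_comp.partrec₂).map
    (primrec₂_splitCode.comp (Primrec.fst.comp hr) (Primrec.snd.comp hr)).to_comp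

def runPair (U : Code) (n : ℕ) : Part ℕ :=
  (decodePair n.unpair.1).bind fun qs =>
    (U.eval (Nat.pair qs.2 0)).bind fun m => U.eval (Nat.pair qs.1 m)

theorem partrec_runPair (U : Code) : Partrec (runPair U) := by
  have hU : Partrec U.eval := Partrec.nat_iff.2 (Code.exists_code.2 ⟨U, rfl⟩)
  refine (partrec_decodePair.comp (Primrec.fst.comp Primrec.unpair).to_comp).bind ?_
  refine (hU.comp ((Primrec₂.natPair.comp (Primrec.snd.comp Primrec.snd)
    (Primrec.const 0)).to_comp)).bind ?_
  exact (hU.comp (Primrec₂.natPair.comp (Primrec.fst.comp (Primrec.snd.comp Primrec.fst))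
    Primrec.snd).to_comp).to₂

theorem Cpx_le_length {U : Code} {x p : List Bool}
    (h : strToNat x ∈ U.eval (Nat.pair (strToNat p) 0)) : Cpx U x ≤ p.length :=
  Nat.sInf_le ⟨p, rfl, h⟩

theorem CpxCondN_le_length {U : Code} {x q : List Bool} {m : ℕ}
    (h : strToNat x ∈ U.eval (Nat.pair (strToNat q) m)) : CpxCondN U x m ≤ q.length :=
  Nat.sInf_le ⟨q, rfl, h⟩

namespace Universal

variable {U : Code}

theorem exists_prefix (hU : Universal U) {f : ℕ →. ℕ} (hf : Partrec f) :
    ∃ w : List Bool, ∀ (p : List Bool) (m a : ℕ), a ∈ f (Nat.pair (strToNat p) m) →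
      a ∈ U.eval (Nat.pair (strToNat (w ++ p)) m) := by
  obtain ⟨V, hV⟩ := Code.exists_code.1 (Partrec.nat_iff.1 hf)
  obtain ⟨w, hw⟩ := hU V
  refine ⟨w, fun p m a ha => ?_⟩
  obtain ⟨y, rfl⟩ := strToNat_surjective m
  have ha' : a ∈ evalS V p y := by rwa [evalS, hV]
  rw [← evalS, hw p y (Part.dom_iff_mem.2 ⟨a, ha'⟩)]
  exact ha'

theorem exists_copy_prefix (hU : Universal U) :
    ∃ w : List Bool, ∀ (x : List Bool) (m : ℕ),
      strToNat x ∈ U.eval (Nat.pair (strToNat (w ++ x)) m) := by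
  have hf : Partrec fun n : ℕ => Part.some n.unpair.1 :=
    (Primrec.fst.comp Primrec.unpair).to_comp.partrec
  obtain ⟨w, hw⟩ := hU.exists_prefix hf
  exact ⟨w, fun x m => hw x m _ (by simp)⟩

theorem exists_length_eq_CpxCondN (hU : Universal U) (x : List Bool) (m : ℕ) :
    ∃ q : List Bool, q.length = CpxCondN U x m ∧
      strToNat x ∈ U.eval (Nat.pair (strToNat q) m) := by
  obtain ⟨w, hw⟩ := hU.exists_copy_prefix
  exact Nat.sInf_mem (s := {n | ∃ q : List Bool, q.length = n ∧ _}) ⟨_, w ++ x, rfl, hw x m⟩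

theorem CpxCondN_le_length_add (hU : Universal U) :
    ∃ k, ∀ (x : List Bool) (m : ℕ), CpxCondN U x m ≤ x.length + k := by
  obtain ⟨w, hw⟩ := hU.exists_copy_prefix
  refine ⟨w.length, fun x m => (CpxCondN_le_length (hw x m)).trans ?_⟩
  simp [add_comm]

theorem exists_length_eq_CSet (hU : Universal U) (S : Finset (List Bool)) :
    ∃ s : List Bool, s.length = CSet U S ∧ setCode S ∈ U.eval (Nat.pair (strToNat s) 0) := by
  obtain ⟨w, hw⟩ := hU.exists_prefix (Computable.const (setCode S)).partrec
  exact Nat.sInf_mem (s := {n | ∃ s : List Bool, s.length = n ∧ _})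
    ⟨_, w ++ [], rfl, hw [] 0 _ (Part.mem_some _)⟩

theorem Cpx_le_of_comp (hU : Universal U) :
    ∃ k, ∀ (x q s : List Bool) (m : ℕ), m ∈ U.eval (Nat.pair (strToNat s) 0) →
      strToNat x ∈ U.eval (Nat.pair (strToNat q) m) →
      Cpx U x ≤ s.length + q.length + 2 * Nat.log 2 (q.length + 1) + k := by
  obtain ⟨w, hw⟩ := hU.exists_prefix (partrec_runPair U)
  refine ⟨w.length + 1, fun x q s m hs hq => ?_⟩
  obtain ⟨L, hL⟩ := strToNat_surjective q.length
  have hrun : strToNat x ∈ runPair U (Nat.pair (strToNat (pairProgram L q s)) 0) := by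
    simp only [runPair, Nat.unpair_pair, decodePair_pairProgram L q s hL]
    exact Part.mem_bind_iff.2 ⟨_, Part.mem_some _, Part.mem_bind_iff.2 ⟨m, hs, hq⟩⟩
  have hlen : L.length ≤ Nat.log 2 (q.length + 1) := hL ▸ length_le_log_strToNat L
  calc Cpx U x ≤ (w ++ pairProgram L q s).length := Cpx_le_length (hw _ 0 _ hrun)
    _ ≤ _ := by simp only [List.length_append, length_pairProgram]; omega

theorem Cpx_le_CSet_add_CpxCondN (hU : Universal U) :
    ∃ k, ∀ (x : List Bool) (S : Finset (List Bool)),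
      Cpx U x ≤ CSet U S + CpxCondN U x (setCode S) +
        2 * Nat.log 2 (CpxCondN U x (setCode S) + 1) + k := by
  obtain ⟨k, hk⟩ := hU.Cpx_le_of_comp
  refine ⟨k, fun x S => ?_⟩
  obtain ⟨s, hs_len, hs⟩ := hU.exists_length_eq_CSet S
  obtain ⟨q, hq_len, hq⟩ := hU.exists_length_eq_CpxCondN x (setCode S)
  rw [← hs_len, ← hq_len]
  exact hk x q s _ hs hq

end Universal

theorem Nat.log_two_add_le {n : ℕ} (hn : n ≠ 0) (k : ℕ) :
    Nat.log 2 (n + k) ≤ Nat.log 2 n + k := by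
  have hn' : n < 2 ^ (Nat.log 2 n + 1) := Nat.lt_pow_succ_log_self one_lt_two n
  have hk : k < 2 ^ k := Nat.lt_two_pow_self
  refine Nat.lt_succ_iff.1 (Nat.log_lt_of_lt_pow (by omega) ?_)
  calc n + k < 2 ^ (Nat.log 2 n + 1) * 2 ^ k := by nlinarith
    _ = 2 ^ (Nat.log 2 n + k + 1) := by ring

theorem sufficient_implies_typical :
    ∀ U : Nat.Partrec.Code, Universal U →
    ∃ e : ℕ, ∀ x : List Bool, 2 ≤ x.length → ∀ S : Finset (List Bool), x ∈ S →
      ∀ c : ℕ, CSet U S + Nat.log 2 S.card ≤ Cpx U x + c →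
      (Nat.log 2 S.card : ℤ) - CpxCondN U x (setCode S) ≤ (c : ℤ) + e * Nat.log 2 x.length := by
  intro U hU
  obtain ⟨k₁, hCpx⟩ := hU.Cpx_le_CSet_add_CpxCondN
  obtain ⟨k₂, hCond⟩ := hU.CpxCondN_le_length_add
  refine ⟨k₁ + 2 * k₂ + 4, fun x hx S _ c hsuff => ?_⟩
  have hlog_x : 1 ≤ Nat.log 2 x.length := Nat.log_pos one_lt_two hx
  have hlog_K : Nat.log 2 (CpxCondN U x (setCode S) + 1) ≤ Nat.log 2 x.length + (k₂ + 1) :=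
    (Nat.log_mono_right (by have := hCond x (setCode S); omega)).trans
      (Nat.log_two_add_le (by omega) _)
  have hC := hCpx x S
  zify at hsuff hC hlog_K hlog_x
  push_cast
  nlinarith
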